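/- In the diagonalization setting, fix an index j and a point β ∈ ℂ, and suppose the diagonal entry d_j has a pole of order t ≥ 1 at β (ord_β(d_j) = −t). Then: (1) Ŝ_j(β) ≠ 0; (2) Q⁻¹.mulVec Ŝ_j = d_j⁻¹ • T_j as vectors over RatFunc ℂ; (3) every nonzero component of Q⁻¹.mulVec Ŝ_j has ord_β ≥ t; and (4) at least one component of Q⁻¹.mulVec Ŝ_j has ord_β exactly equal to t. Thus Ŝ_j is a root function of Q⁻¹ at β of exact order t, i.e., a canonical pole function of Q at β. -/

import Mathlib

set_option synthInstance.maxHeartbeats 1000000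
set_option maxHeartbeats 1000000

/-- `HasOrdAt α r k` : the rational function `r` has order `k ∈ ℤ` at `α`, i.e.
`r = (X − α)^k · (p/q)` with `p(α) ≠ 0` and `q(α) ≠ 0`. -/
def HasOrdAt (α : ℂ) (r : RatFunc ℂ) (k : ℤ) : Prop :=
  ∃ p q : Polynomial ℂ, Polynomial.eval α p ≠ 0 ∧ Polynomial.eval α q ≠ 0 ∧
    r = (RatFunc.X - RatFunc.C α) ^ k *
      (algebraMap (Polynomial ℂ) (RatFunc ℂ) p / algebraMap (Polynomial ℂ) (RatFunc ℂ) q)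

/-- Entrywise embedding of a polynomial matrix into matrices over `RatFunc ℂ`. -/
noncomputable def matRF {n : ℕ} (M : Matrix (Fin n) (Fin n) (Polynomial ℂ)) :
    Matrix (Fin n) (Fin n) (RatFunc ℂ) :=
  M.map (algebraMap (Polynomial ℂ) (RatFunc ℂ))

/-- The `i`-th column of a polynomial matrix, regarded over `RatFunc ℂ`. -/
noncomputable def colRF {n : ℕ} (M : Matrix (Fin n) (Fin n) (Polynomial ℂ)) (i : Fin n) :
    Fin n → RatFunc ℂ :=
  fun k => algebraMap (Polynomial ℂ) (RatFunc ℂ) (M k i)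

/-- The `i`-th column of a polynomial matrix evaluated (entrywise) at `α`. -/
def evalCol {n : ℕ} (M : Matrix (Fin n) (Fin n) (Polynomial ℂ)) (i : Fin n) (α : ℂ) :
    Fin n → ℂ :=
  fun k => Polynomial.eval α (M k i)

/-!
Since `S` and `T` are invertible over `ℂ[X]`, `D = S Q T` gives `Q⁻¹ S⁻¹ = T D⁻¹` with `D⁻¹`
diagonal, so the `j`-th columns give `Q⁻¹ Ŝ_j = d_j⁻¹ T_j`. The factor `d_j⁻¹` has a zero of
order exactly `t` at `β`, and the column `T_j` does not vanish at `β` because `det T` is a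
nonzero constant. Hence every nonzero component has order `t + ord_β (T k j) ≥ t`, with equality
wherever `T k j` does not vanish at `β`.
-/

open Polynomial

theorem RatFunc.algebraMap_X_sub_C {K : Type*} [Field K] (a : K) :
    algebraMap K[X] (RatFunc K) (Polynomial.X - Polynomial.C a) = RatFunc.X - RatFunc.C a := by
  rw [map_sub, RatFunc.algebraMap_X, RatFunc.algebraMap_C]

theorem RatFunc.X_sub_C_ne_zero {K : Type*} [Field K] (a : K) :
    (RatFunc.X - RatFunc.C a : RatFunc K) ≠ 0 := by
  rw [← RatFunc.algebraMap_X_sub_C]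
  exact RatFunc.algebraMap_ne_zero (Polynomial.X_sub_C_ne_zero a)

namespace HasOrdAt

variable {β : ℂ} {r : RatFunc ℂ} {k : ℤ}

theorem inv (h : HasOrdAt β r k) : HasOrdAt β r⁻¹ (-k) := by
  obtain ⟨p, q, hp, hq, rfl⟩ := h
  exact ⟨q, p, hq, hp, by rw [mul_inv, ← zpow_neg, inv_div]⟩

theorem mul_algebraMap (h : HasOrdAt β r k) {f : ℂ[X]} (hf : f ≠ 0) :
    HasOrdAt β (r * algebraMap ℂ[X] (RatFunc ℂ) f) (k + f.rootMultiplicity β) := by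
  obtain ⟨p, q, hp, hq, rfl⟩ := h
  set u := f /ₘ (X - C β) ^ f.rootMultiplicity β
  have hf_eq : algebraMap ℂ[X] (RatFunc ℂ) f
      = (RatFunc.X - RatFunc.C β) ^ f.rootMultiplicity β * algebraMap ℂ[X] (RatFunc ℂ) u := by
    rw [← RatFunc.algebraMap_X_sub_C, ← map_pow, ← map_mul,
      pow_mul_divByMonic_rootMultiplicity_eq]
  refine ⟨p * u, q, ?_, hq, ?_⟩
  · simpa [hp] using eval_divByMonic_pow_rootMultiplicity_ne_zero β hf
  · rw [hf_eq, zpow_add₀ (RatFunc.X_sub_C_ne_zero β), zpow_natCast, map_mul]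
    ring

theorem mul_algebraMap_of_eval_ne_zero (h : HasOrdAt β r k) {f : ℂ[X]} (hf : f.eval β ≠ 0) :
    HasOrdAt β (r * algebraMap ℂ[X] (RatFunc ℂ) f) k := by
  have hf0 : f ≠ 0 := by rintro rfl; exact hf eval_zero
  simpa [rootMultiplicity_eq_zero hf] using h.mul_algebraMap hf0

end HasOrdAt

namespace Matrix

variable {n : Type*} [Fintype n] [DecidableEq n]

theorem transpose_ne_zero_of_isUnit_det {R : Type*} [CommRing R] [Nontrivial R]
    {M : Matrix n n R} (hM : IsUnit M.det) (i : n) : Mᵀ i ≠ 0 := fun h =>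
  hM.ne_zero (det_eq_zero_of_column_eq_zero i fun k => congrFun h k)

theorem map_nonsing_inv {R S : Type*} [CommRing R] [CommRing S] (f : R →+* S)
    {M : Matrix n n R} (hM : IsUnit M.det) : M⁻¹.map f = (M.map f)⁻¹ := by
  refine (inv_eq_left_inv ?_).symm
  rw [← Matrix.map_mul, nonsing_inv_mul M hM, Matrix.map_one f f.map_zero f.map_one]

theorem inv_mul_inv_eq_mul_inv {R : Type*} [CommRing R] (A Q : Matrix n n R)
    {B : Matrix n n R} (hB : IsUnit B.det) : Q⁻¹ * A⁻¹ = B * (A * Q * B)⁻¹ := by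
  rw [mul_inv_rev, mul_inv_rev, mul_nonsing_inv_cancel_left _ _ hB]

theorem IsDiag.inv_eq_diagonal {K : Type*} [Field K] {D : Matrix n n K} (hD : D.IsDiag)
    (hdet : D.det ≠ 0) : D⁻¹ = diagonal fun i => (D i i)⁻¹ := by
  have hdiag_ne : ∀ i, D i i ≠ 0 := by
    rw [← hD.diagonal_diag, det_diagonal, Finset.prod_ne_zero_iff] at hdet
    exact fun i => hdet i (Finset.mem_univ i)
  conv_lhs => rw [← hD.diagonal_diag]
  refine inv_eq_left_inv ?_
  rw [diagonal_mul_diagonal, ← diagonal_one]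
  exact congrArg diagonal (funext fun i => inv_mul_cancel₀ (hdiag_ne i))

end Matrix

section PolynomialMatrix

variable {n : ℕ} {M : Matrix (Fin n) (Fin n) ℂ[X]}

theorem isUnit_det_matRF (hM : IsUnit M.det) : IsUnit (matRF M).det := by
  rw [matRF, ← RingHom.mapMatrix_apply, ← RingHom.map_det]
  exact hM.map _

theorem matRF_nonsing_inv (hM : IsUnit M.det) : matRF M⁻¹ = (matRF M)⁻¹ :=
  Matrix.map_nonsing_inv _ hM

theorem evalCol_ne_zero (hM : IsUnit M.det) (i : Fin n) (β : ℂ) : evalCol M i β ≠ 0 :=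
  Matrix.transpose_ne_zero_of_isUnit_det (M := M.map (evalRingHom β))
    (by rw [← RingHom.mapMatrix_apply, ← RingHom.map_det]; exact hM.map _) i

end PolynomialMatrix

theorem mulVec_colRF_nonsing_inv_of_isDiag {n : ℕ} {Q D : Matrix (Fin n) (Fin n) (RatFunc ℂ)}
    {S T : Matrix (Fin n) (Fin n) ℂ[X]} (hQ : Q.det ≠ 0) (hS : IsUnit S.det)
    (hT : IsUnit T.det) (hD : D = matRF S * Q * matRF T) (hdiag : D.IsDiag) (j : Fin n) :
    Q⁻¹.mulVec (colRF S⁻¹ j) = (D j j)⁻¹ • colRF T j := by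
  have hD_det : D.det ≠ 0 := by
    rw [hD, Matrix.det_mul, Matrix.det_mul]
    exact mul_ne_zero (mul_ne_zero (isUnit_det_matRF hS).ne_zero hQ) (isUnit_det_matRF hT).ne_zero
  have hinv : Q⁻¹ * matRF S⁻¹ = matRF T * Matrix.diagonal fun i => (D i i)⁻¹ := by
    rw [matRF_nonsing_inv hS, Matrix.inv_mul_inv_eq_mul_inv _ _ (isUnit_det_matRF hT), ← hD,
      hdiag.inv_eq_diagonal hD_det]
  funext k
  have hkj := congrFun (congrFun hinv k) j
  rw [Matrix.mul_diagonal] at hkj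
  simpa [Matrix.mul_apply, Matrix.mulVec, dotProduct, colRF, matRF, mul_comm] using hkj

theorem column_of_S_inv_is_root_function_of_Q_inv_of_exact_order_general
    (n : ℕ)
    (Q : Matrix (Fin n) (Fin n) (RatFunc ℂ)) (hQ : Q.det ≠ 0)
    (S T : Matrix (Fin n) (Fin n) (Polynomial ℂ))
    (hS : IsUnit S.det) (hT : IsUnit T.det)
    (D : Matrix (Fin n) (Fin n) (RatFunc ℂ))
    (hD : D = matRF S * Q * matRF T) (hdiag : D.IsDiag)
    (j : Fin n) (β : ℂ) (t : ℕ)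
    (hpole : HasOrdAt β (D j j) (-(t : ℤ))) :
    evalCol (S⁻¹) j β ≠ 0 ∧
    Q⁻¹.mulVec (colRF (S⁻¹) j) = (D j j)⁻¹ • colRF T j ∧
    (∀ k : Fin n, Q⁻¹.mulVec (colRF (S⁻¹) j) k ≠ 0 →
      ∃ m : ℤ, HasOrdAt β (Q⁻¹.mulVec (colRF (S⁻¹) j) k) m ∧ (t : ℤ) ≤ m) ∧
    (∃ k : Fin n, HasOrdAt β (Q⁻¹.mulVec (colRF (S⁻¹) j) k) (t : ℤ)) := by
  have hcol := mulVec_colRF_nonsing_inv_of_isDiag hQ hS hT hD hdiag j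
  have hcomp : ∀ k,
      Q⁻¹.mulVec (colRF S⁻¹ j) k = (D j j)⁻¹ * algebraMap ℂ[X] (RatFunc ℂ) (T k j) :=
    fun k => congrFun hcol k
  have hzero : HasOrdAt β (D j j)⁻¹ t := by simpa using hpole.inv
  refine ⟨evalCol_ne_zero (Matrix.isUnit_nonsing_inv_det S hS) j β, hcol, fun k hk => ?_, ?_⟩
  · have hTkj : T k j ≠ 0 := fun h => hk (by simp [hcomp, h])
    exact ⟨t + (T k j).rootMultiplicity β, hcomp k ▸ hzero.mul_algebraMap hTkj, by omega⟩
  · obtain ⟨k, hk⟩ := Function.ne_iff.mp (evalCol_ne_zero hT j β)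
    exact ⟨k, hcomp k ▸ hzero.mul_algebraMap_of_eval_ne_zero hk⟩

/-- In the diagonalization setting `D = S·Q·T`, if the diagonal entry
`d_j = D j j` has a pole of order `t ≥ 1` at `β` (i.e. `ord_β(d_j) = −t`), then
`Ŝ_j(β) ≠ 0`, `Q⁻¹.mulVec Ŝ_j = d_j⁻¹ • T_j`, every nonzero component of
`Q⁻¹.mulVec Ŝ_j` has order `≥ t` at `β`, and some component has order exactly `t`:
`Ŝ_j` is a root function of `Q⁻¹` at `β` of exact order `t`, i.e. a canonical pole
function of `Q` at `β`. -/
theorem column_of_S_inv_is_root_function_of_Q_inv_of_exact_order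
    (n : ℕ) (hn : 1 ≤ n)
    (Q : Matrix (Fin n) (Fin n) (RatFunc ℂ)) (hQ : Q.det ≠ 0)
    (S T : Matrix (Fin n) (Fin n) (Polynomial ℂ))
    (hS : IsUnit S.det) (hT : IsUnit T.det)
    (D : Matrix (Fin n) (Fin n) (RatFunc ℂ))
    (hD : D = matRF S * Q * matRF T) (hdiag : D.IsDiag)
    (j : Fin n) (β : ℂ) (t : ℕ) (ht : 1 ≤ t)
    (hpole : HasOrdAt β (D j j) (-(t : ℤ))) :
    evalCol (S⁻¹) j β ≠ 0 ∧
    Q⁻¹.mulVec (colRF (S⁻¹) j) = (D j j)⁻¹ • colRF T j ∧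
    (∀ k : Fin n, Q⁻¹.mulVec (colRF (S⁻¹) j) k ≠ 0 →
      ∃ m : ℤ, HasOrdAt β (Q⁻¹.mulVec (colRF (S⁻¹) j) k) m ∧ (t : ℤ) ≤ m) ∧
    (∃ k : Fin n, HasOrdAt β (Q⁻¹.mulVec (colRF (S⁻¹) j) k) (t : ℤ)) :=
  column_of_S_inv_is_root_function_of_Q_inv_of_exact_order_general n Q hQ S T hS hT D hD hdiag j β t
    hpole
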